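/- arXiv:1110.1715 — 2 statements merged into one kernel-verified Lean document; each statement's English description precedes it below -/
import Mathlib

section
/- Let ABCD be a convex quadrilateral in the Euclidean plane ℝ². There exists δ_E > 0 such that for every point E strictly inside segment AB with dist(A,E) < δ_E, there exists δ_F > 0 (depending on E) such that for every point F strictly inside segment BC with dist(B,F) < δ_F, the convex pentagon T = AEFCD, with interior angles Â = ∠DAE, Ê = ∠AEF, F̂ = ∠EFC, Ĉ = ∠FCD, D̂ = ∠CDA, satisfies: (i) 2·dist(A,E) < min{dist(E,F), dist(F,C), dist(C,D), dist(D,A)}; (ii) for all natural numbers a, b, c, d, e with a·Â + b·Ê + c·F̂ + d·Ĉ + e·D̂ = 2π, if b ≥ 1 or c ≥ 1, then b = 1, c = 1, and exactly one of a, d, e is positive; (iii) for each l ∈ {dist(E,F), 2·dist(F,C)}, for all natural numbers a, b and all c ∈ {0, 1, −1, 2, −2}, one has l ≠ a·dist(C,D) + b·dist(D,A) + c·dist(A,E). -/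
open Real EuclideanGeometry

abbrev P2 : Type := EuclideanSpace ℝ (Fin 2)

/-- A convex quadrilateral ABCD (in cyclic order): the four points are in convex
position (no vertex in the convex hull of the other three) and the diagonals
AC and BD cross. -/
def IsConvexQuadrilateral (A B C D : P2) : Prop :=
  A ∉ convexHull ℝ ({B, C, D} : Set P2) ∧
  B ∉ convexHull ℝ ({A, C, D} : Set P2) ∧
  C ∉ convexHull ℝ ({A, B, D} : Set P2) ∧
  D ∉ convexHull ℝ ({A, B, C} : Set P2) ∧
  (openSegment ℝ A C ∩ openSegment ℝ B D).Nonempty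

/-!
As `E → A`, the length `2 · AE` tends to `0` while the other sides stay bounded below, which
gives (i). Fix `E` and let `F → B` along `BC`. The angle `t = ∠FEB` tends to `0⁺`, and the angles
of the pentagon are `∠A, π - t, ∠B + t, ∠C, ∠D`. In a relation
`a ∠A + b (π - t) + c (∠B + t) + d ∠C + e ∠D = 2π` all coefficients are bounded, so for
`b ≠ c` it pins `t` down to one of finitely many values; hence for small `t` we get `b = c`, and
the angle sum `∠A + ∠B + ∠C + ∠D = 2π` of the quadrilateral, all four angles lying in `(0, π)`,
forces `b = c = 1` and exactly one other positive coefficient. For (iii), `EF → EB` and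
`2 FC → 2 BC` without attaining these limits (`EF = EB` would make `EBF` isosceles, i.e.
`t = π - 2∠B`), while the numbers `a CD + b DA + c AE` below any bound form a finite set.
-/

open Filter Topology Set

theorem eventually_nhdsNE_notMem_of_finite_inter {X : Type*} [TopologicalSpace X] [T1Space X]
    {x : X} {S U : Set X} (hU : U ∈ 𝓝 x) (hSU : (S ∩ U).Finite) :
    ∀ᶠ y in 𝓝[≠] x, y ∉ S := by
  have := hSU.to_subtype
  filter_upwards [nhdsNE_of_nhdsNE_sdiff_finite (mem_nhdsWithin_of_mem_nhds hU) this]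
    with y hy hyS
  exact hy.2 ⟨hyS, hy.1⟩

theorem Set.Finite.eventually_nhdsNE_notMem {X : Type*} [TopologicalSpace X] [T1Space X]
    {S : Set X} (hS : S.Finite) (x : X) : ∀ᶠ y in 𝓝[≠] x, y ∉ S :=
  eventually_nhdsNE_notMem_of_finite_inter univ_mem (hS.subset inter_subset_left)

theorem Nat.le_floor_div_of_mul_le {m w R : ℝ} (hm : 0 < m) (hmw : m ≤ w) {k : ℕ}
    (h : k * w ≤ R) : k ≤ ⌊R / m⌋₊ :=
  Nat.le_floor <| (le_div_iff₀ hm).2 <| (mul_le_mul_of_nonneg_left hmw k.cast_nonneg).trans h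

theorem eventually_nhdsNE_ne_nat_mul_add_nat_mul_add_int_mul {p q : ℝ} (hp : 0 < p)
    (hq : 0 < q) (r : ℝ) {C : Set ℤ} (hC : C.Finite) (x : ℝ) :
    ∀ᶠ y in 𝓝[≠] x, ∀ a b : ℕ, ∀ c ∈ C, y ≠ a * p + b * q + c * r := by
  obtain ⟨K, hK⟩ := (hC.image fun c : ℤ => -((c : ℝ) * r)).bddAbove
  set S := {y : ℝ | ∃ a b : ℕ, ∃ c ∈ C, y = a * p + b * q + c * r}
  have hfin : (S ∩ Iic (x + 1)).Finite := by
    refine (((finite_Iic ⌊(x + 1 + K) / p⌋₊).prod (finite_Iic ⌊(x + 1 + K) / q⌋₊)).prod hC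
      |>.image fun n : (ℕ × ℕ) × ℤ => n.1.1 * p + n.1.2 * q + n.2 * r).subset ?_
    rintro _ ⟨⟨a, b, c, hc, rfl⟩, hy⟩
    have hcK : -((c : ℝ) * r) ≤ K := hK ⟨c, hc, rfl⟩
    have hap := mul_nonneg a.cast_nonneg hp.le
    have hbq := mul_nonneg b.cast_nonneg hq.le
    have hy : a * p + b * q + c * r ≤ x + 1 := hy
    exact ⟨((a, b), c), ⟨⟨Nat.le_floor_div_of_mul_le hp le_rfl (by linarith),
      Nat.le_floor_div_of_mul_le hq le_rfl (by linarith)⟩, hc⟩, rfl⟩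
  filter_upwards [eventually_nhdsNE_notMem_of_finite_inter (Iic_mem_nhds (lt_add_one x)) hfin]
    with y hy a b c hc hyS
  exact hy ⟨a, b, c, hc, hyS⟩

theorem eventually_nhdsGT_eq_of_perturbed_sum_eq {α β γ δ : ℝ} (hα : 0 < α) (hβ : 0 < β)
    (hγ : 0 < γ) (hδ : 0 < δ) :
    ∀ᶠ t in 𝓝[>] 0, ∀ a b c d e : ℕ,
      a * α + b * (π - t) + c * (β + t) + d * γ + e * δ = 2 * π → b = c := by
  set m := min (min α β) (min (min γ δ) (π - 1))
  have hm : 0 < m := lt_min (lt_min hα hβ) (lt_min (lt_min hγ hδ) (by linarith [pi_gt_three]))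
  set N := ⌊2 * π / m⌋₊
  -- a solution with `b ≠ c` determines `t` as the value of `g` at its coefficients
  set g : ℕ × ℕ × ℕ × ℕ × ℕ → ℝ := fun n =>
    (n.1 * α + n.2.1 * π + n.2.2.1 * β + n.2.2.2.1 * γ + n.2.2.2.2 * δ - 2 * π) /
      (n.2.1 - n.2.2.1)
  have hg := ((finite_Iic (N, N, N, N, N)).image g).eventually_nhdsNE_notMem 0
  filter_upwards [hg.filter_mono (nhdsGT_le_nhdsNE 0), Ioo_mem_nhdsGT one_pos]
    with t hbad ⟨ht0, ht1⟩ a b c d e h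
  by_contra hbc
  have hbc' : (b : ℝ) - c ≠ 0 := sub_ne_zero.2 (Nat.cast_injective.ne hbc)
  have hmα : m ≤ α := (min_le_left _ _).trans (min_le_left _ _)
  have hmβ : m ≤ β + t := ((min_le_left _ _).trans (min_le_right _ _)).trans (by linarith)
  have hmγ : m ≤ γ := ((min_le_right _ _).trans (min_le_left _ _)).trans (min_le_left _ _)
  have hmδ : m ≤ δ := ((min_le_right _ _).trans (min_le_left _ _)).trans (min_le_right _ _)
  have hmπ : m ≤ π - t := ((min_le_right _ _).trans (min_le_right _ _)).trans (by linarith)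
  have := mul_nonneg a.cast_nonneg hα.le
  have := mul_nonneg b.cast_nonneg (hm.le.trans hmπ)
  have := mul_nonneg c.cast_nonneg (hm.le.trans hmβ)
  have := mul_nonneg d.cast_nonneg hγ.le
  have := mul_nonneg e.cast_nonneg hδ.le
  refine hbad ⟨(a, b, c, d, e), ?_, ?_⟩
  · simp only [mem_Iic, Prod.mk_le_mk]
    exact ⟨Nat.le_floor_div_of_mul_le hm hmα (by linarith),
      Nat.le_floor_div_of_mul_le hm hmπ (by linarith),
      Nat.le_floor_div_of_mul_le hm hmβ (by linarith),
      Nat.le_floor_div_of_mul_le hm hmγ (by linarith),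
      Nat.le_floor_div_of_mul_le hm hmδ (by linarith)⟩
  · rw [div_eq_iff hbc']
    linear_combination h

theorem eq_one_and_exactly_one_pos_of_nat_mul_add_eq_two_pi {α β γ δ : ℝ} (hα : α ∈ Ioo 0 π)
    (hβ : β ∈ Ioo 0 π) (hγ : γ ∈ Ioo 0 π) (hδ : δ ∈ Ioo 0 π) (hsum : α + β + γ + δ = 2 * π)
    {a b d e : ℕ} (hb : 1 ≤ b) (h : a * α + b * (π + β) + d * γ + e * δ = 2 * π) :
    b = 1 ∧ ((0 < a ∧ d = 0 ∧ e = 0) ∨ (a = 0 ∧ 0 < d ∧ e = 0) ∨ (a = 0 ∧ d = 0 ∧ 0 < e)) := by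
  have le_mul_of_pos {w : ℝ} (hw : 0 < w) {k : ℕ} (hk : 0 < k) : w ≤ k * w :=
    le_mul_of_one_le_left hw.le (by exact_mod_cast hk)
  have := mul_nonneg a.cast_nonneg hα.1.le
  have := mul_nonneg d.cast_nonneg hγ.1.le
  have := mul_nonneg e.cast_nonneg hδ.1.le
  obtain rfl : b = 1 := by
    by_contra hb1
    have : (2 : ℝ) ≤ b := by exact_mod_cast (show 2 ≤ b by omega)
    have := mul_le_mul_of_nonneg_right this (by linarith [hβ.1, pi_pos] : (0 : ℝ) ≤ π + β)
    linarith [hβ.1]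
  have hade : a * α + d * γ + e * δ = α + γ + δ - π := by push_cast at h; linarith
  have h_some : ¬ (a = 0 ∧ d = 0 ∧ e = 0) := by
    rintro ⟨rfl, rfl, rfl⟩
    push_cast at hade
    linarith [hβ.2]
  have h_ad : ¬ (0 < a ∧ 0 < d) := fun ⟨ha, hd⟩ => by
    linarith [le_mul_of_pos hα.1 ha, le_mul_of_pos hγ.1 hd, hδ.2]
  have h_ae : ¬ (0 < a ∧ 0 < e) := fun ⟨ha, he⟩ => by
    linarith [le_mul_of_pos hα.1 ha, le_mul_of_pos hδ.1 he, hγ.2]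
  have h_de : ¬ (0 < d ∧ 0 < e) := fun ⟨hd, he⟩ => by
    linarith [le_mul_of_pos hγ.1 hd, le_mul_of_pos hδ.1 he, hα.2]
  exact ⟨rfl, by omega⟩

theorem eventually_nhdsGT_perturbed_angle_relation {α β γ δ : ℝ} (hα : α ∈ Ioo 0 π)
    (hβ : β ∈ Ioo 0 π) (hγ : γ ∈ Ioo 0 π) (hδ : δ ∈ Ioo 0 π) (hsum : α + β + γ + δ = 2 * π) :
    ∀ᶠ t in 𝓝[>] 0, ∀ a b c d e : ℕ,
      a * α + b * (π - t) + c * (β + t) + d * γ + e * δ = 2 * π → (1 ≤ b ∨ 1 ≤ c) →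
      b = 1 ∧ c = 1 ∧
        ((0 < a ∧ d = 0 ∧ e = 0) ∨ (a = 0 ∧ 0 < d ∧ e = 0) ∨ (a = 0 ∧ d = 0 ∧ 0 < e)) := by
  filter_upwards [eventually_nhdsGT_eq_of_perturbed_sum_eq hα.1 hβ.1 hγ.1 hδ.1]
    with t hbc a b c d e h hb
  obtain rfl := hbc a b c d e h
  obtain ⟨rfl, hade⟩ := eq_one_and_exactly_one_pos_of_nat_mul_add_eq_two_pi (a := a) (d := d)
    (e := e) hα hβ hγ hδ hsum (hb.elim id id) (by linear_combination h)
  exact ⟨rfl, rfl, hade⟩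

section Euclidean

variable {V P : Type*} [NormedAddCommGroup V] [InnerProductSpace ℝ V] [MetricSpace P]
  [NormedAddTorsor V P]

theorem angle_add_angle_add_angle_add_angle_eq_two_pi {A B C D X : P} (hAC : Sbtw ℝ A X C)
    (hBD : Sbtw ℝ B X D) :
    ∠ D A B + ∠ A B C + ∠ B C D + ∠ C D A = 2 * π := by
  have hA : ∠ B A X + ∠ X A D = ∠ B A D := angle_add_angle_eq_of_sbtw hBD
  have hB : ∠ A B X + ∠ X B C = ∠ A B C := angle_add_angle_eq_of_sbtw hAC
  have hC : ∠ B C X + ∠ X C D = ∠ B C D := angle_add_angle_eq_of_sbtw hBD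
  have hD : ∠ C D X + ∠ X D A = ∠ C D A := angle_add_angle_eq_of_sbtw hAC.symm
  have tA := angle_add_angle_add_angle_eq_pi B hAC.left_ne
  have tB := angle_add_angle_add_angle_eq_pi C hBD.left_ne
  have tC := angle_add_angle_add_angle_eq_pi D hAC.ne_right
  have tD := angle_add_angle_add_angle_eq_pi A hBD.ne_right
  have sAC := angle_add_angle_eq_pi_of_angle_eq_pi B hAC.angle₁₂₃_eq_pi
  have sDX := angle_add_angle_eq_pi_of_angle_eq_pi D hAC.angle₁₂₃_eq_pi
  linarith [angle_comm D A B, angle_comm X A B, angle_comm A D X, angle_comm X D C,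
    angle_comm D X C, angle_comm C X B, angle_comm D C X]

variable {A B C E F : P}

theorem angle_eq_angle_of_sbtw_of_sbtw (hE : Sbtw ℝ A E B) (hF : Sbtw ℝ B F C) :
    ∠ E B F = ∠ A B C :=
  (hE.symm.angle_eq_left F).trans (hF.angle_eq_right A)

theorem angle_pos_of_sbtw_of_sbtw (hABC : ¬ Collinear ℝ {A, B, C}) (hE : Sbtw ℝ A E B)
    (hF : Sbtw ℝ B F C) : 0 < ∠ F E B := by
  refine angle_pos_of_not_collinear fun hcol => ?_
  rw [← Set.insert_comm E F, ← Set.pair_comm B F,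
    collinear_iff_eq_or_eq_or_angle_eq_zero_or_angle_eq_pi,
    angle_eq_angle_of_sbtw_of_sbtw hE hF] at hcol
  rcases hcol with h | h | h | h
  · exact hE.ne_right h
  · exact hF.left_ne h.symm
  · exact (angle_pos_of_not_collinear hABC).ne' h
  · exact (angle_lt_pi_of_not_collinear hABC).ne h

theorem angle_eq_pi_sub_of_sbtw (hE : Sbtw ℝ A E B) : ∠ A E F = π - ∠ F E B := by
  linarith [angle_add_angle_eq_pi_of_angle_eq_pi F hE.angle₁₂₃_eq_pi, angle_comm A E F]

theorem angle_eq_angle_add_of_sbtw_of_sbtw (hE : Sbtw ℝ A E B) (hF : Sbtw ℝ B F C) :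
    ∠ E F C = ∠ A B C + ∠ F E B := by
  rw [exterior_angle_eq_angle_add_angle C hF.symm, angle_eq_angle_of_sbtw_of_sbtw hE hF,
    add_comm]

theorem dist_ne_dist_of_sbtw_of_sbtw (hE : Sbtw ℝ A E B) (hF : Sbtw ℝ B F C)
    (h : ∠ F E B ≠ π - 2 * ∠ A B C) : dist E F ≠ dist E B := fun hd => h <| by
  linarith [angle_eq_angle_of_dist_eq hd, angle_eq_angle_of_sbtw_of_sbtw hE hF,
    angle_eq_angle_add_of_sbtw_of_sbtw hE hF,
    angle_add_angle_eq_pi_of_angle_eq_pi E hF.angle₁₂₃_eq_pi]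

variable {s : Set P}

theorem tendsto_angle_nhdsGT (hABC : ¬ Collinear ℝ {A, B, C}) (hE : Sbtw ℝ A E B)
    (hs : ∀ F ∈ s, Sbtw ℝ B F C) :
    Tendsto (fun F => ∠ F E B) (𝓝[s] B) (𝓝[>] 0) := by
  refine tendsto_nhdsWithin_iff.2 ⟨?_, eventually_nhdsWithin_of_forall fun F hF =>
    angle_pos_of_sbtw_of_sbtw hABC hE (hs F hF)⟩
  have hcont : ContinuousAt (fun F => ∠ F E B) B :=
    (continuousAt_angle (x := (B, E, B)) hE.ne_right.symm hE.ne_right.symm).comp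
      (f := fun F : P => (F, E, B)) (by fun_prop)
  simpa [angle_self_of_ne hE.ne_right.symm] using hcont.tendsto.mono_left nhdsWithin_le_nhds

theorem tendsto_dist_nhdsNE (hABC : ¬ Collinear ℝ {A, B, C}) (hE : Sbtw ℝ A E B)
    (hs : ∀ F ∈ s, Sbtw ℝ B F C) :
    Tendsto (dist E) (𝓝[s] B) (𝓝[≠] (dist E B)) := by
  refine tendsto_nhdsWithin_iff.2 ⟨(continuous_const.dist continuous_id).tendsto B
    |>.mono_left nhdsWithin_le_nhds, ?_⟩
  have ht := (tendsto_angle_nhdsGT hABC hE hs).mono_right (nhdsGT_le_nhdsNE 0)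
  filter_upwards [self_mem_nhdsWithin,
    ht.eventually ((finite_singleton (π - 2 * ∠ A B C)).eventually_nhdsNE_notMem 0)]
    with F hF hangle
  exact dist_ne_dist_of_sbtw_of_sbtw hE (hs F hF) hangle

theorem tendsto_two_mul_dist_nhdsNE (hs : ∀ F ∈ s, Sbtw ℝ B F C) :
    Tendsto (fun F => 2 * dist F C) (𝓝[s] B) (𝓝[≠] (2 * dist B C)) := by
  refine tendsto_nhdsWithin_iff.2 ⟨((continuous_id.dist continuous_const).const_mul 2).tendsto B
    |>.mono_left nhdsWithin_le_nhds, eventually_nhdsWithin_of_forall fun F hF => ?_⟩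
  have hBF := dist_pos.2 (hs F hF).left_ne
  have := (hs F hF).wbtw.dist_add_dist
  exact fun h => by simp only [mem_singleton_iff] at h; linarith

end Euclidean

theorem sbtw_of_mem_openSegment {V : Type*} [AddCommGroup V] [Module ℝ V] {x y z : V}
    (hxz : x ≠ z) (h : y ∈ openSegment ℝ x z) : Sbtw ℝ x y z := by
  refine ⟨mem_segment_iff_wbtw.1 (openSegment_subset_segment ℝ x z h), ?_, ?_⟩ <;> rintro rfl
  exacts [hxz (left_mem_openSegment_iff.1 h), hxz (right_mem_openSegment_iff.1 h)]

theorem Metric.exists_pos_forall_of_eventually_nhdsWithin {X : Type*} [PseudoMetricSpace X]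
    {x : X} {s : Set X} {p : X → Prop} (h : ∀ᶠ y in 𝓝[s] x, p y) :
    ∃ δ > (0 : ℝ), ∀ y ∈ s, dist x y < δ → p y := by
  obtain ⟨δ, hδ, hsub⟩ := Metric.mem_nhdsWithin_iff.1 h
  exact ⟨δ, hδ, fun y hy hxy => hsub ⟨by rwa [Metric.mem_ball, dist_comm], hy⟩⟩

namespace IsConvexQuadrilateral

variable {A B C D : P2}

theorem rotate (h : IsConvexQuadrilateral A B C D) : IsConvexQuadrilateral B C D A := by
  obtain ⟨hA, hB, hC, hD, X, hAC, hBD⟩ := h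
  refine ⟨?_, ?_, ?_, ?_, X, hBD, openSegment_symm ℝ A C ▸ hAC⟩
  · rwa [Set.pair_comm D A, Set.insert_comm C A]
  · rwa [Set.pair_comm D A, Set.insert_comm B A]
  · rwa [Set.pair_comm C A, Set.insert_comm B A]
  · exact hA

theorem ne₁₂ (h : IsConvexQuadrilateral A B C D) : A ≠ B := fun hAB =>
  h.1 (subset_convexHull ℝ _ (by simp [hAB]))

theorem ne₁₃ (h : IsConvexQuadrilateral A B C D) : A ≠ C := fun hAC =>
  h.1 (subset_convexHull ℝ _ (by simp [hAC]))

theorem not_collinear (h : IsConvexQuadrilateral A B C D) : ¬ Collinear ℝ {A, B, C} := by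
  obtain ⟨hA, hB, hC, -⟩ := h
  intro hcol
  rcases hcol.wbtw_or_wbtw_or_wbtw with hABC | hBCA | hCAB
  · exact hB (segment_subset_convexHull (by simp) (by simp) hABC.mem_segment)
  · exact hC (segment_subset_convexHull (by simp) (by simp) hBCA.mem_segment)
  · exact hA (segment_subset_convexHull (by simp) (by simp) hCAB.mem_segment)

theorem angle_mem_Ioo (h : IsConvexQuadrilateral A B C D) : ∠ A B C ∈ Ioo 0 π :=
  ⟨angle_pos_of_not_collinear h.not_collinear, angle_lt_pi_of_not_collinear h.not_collinear⟩

theorem angle_add_angle_add_angle_add_angle (h : IsConvexQuadrilateral A B C D) :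
    ∠ D A B + ∠ A B C + ∠ B C D + ∠ C D A = 2 * π := by
  obtain ⟨X, hAC, hBD⟩ := h.2.2.2.2
  exact angle_add_angle_add_angle_add_angle_eq_two_pi (sbtw_of_mem_openSegment h.ne₁₃ hAC)
    (sbtw_of_mem_openSegment h.rotate.ne₁₃ hBD)

theorem eventually_two_mul_dist_lt_min (h : IsConvexQuadrilateral A B C D) :
    ∀ᶠ E in 𝓝 A, 2 * dist A E < min (min (dist E B) (dist B C)) (min (dist C D) (dist D A)) := by
  refine ContinuousAt.eventually_lt (by fun_prop) (by fun_prop) ?_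
  simp only [dist_self, mul_zero, lt_min_iff]
  exact ⟨⟨dist_pos.2 h.ne₁₂, dist_pos.2 h.rotate.ne₁₂⟩, dist_pos.2 h.rotate.rotate.ne₁₂,
    dist_pos.2 h.rotate.rotate.rotate.ne₁₂⟩

end IsConvexQuadrilateral

/-- Selection of the points E ∈ AB and F ∈ BC subject to the conditions
(i)–(iii) of Lemma 3 in the paper. -/
theorem exists_EF_selection
    (A B C D : P2) (hQ : IsConvexQuadrilateral A B C D) :
    ∃ δE > (0:ℝ), ∀ E ∈ openSegment ℝ A B, dist A E < δE →
      ∃ δF > (0:ℝ), ∀ F ∈ openSegment ℝ B C, dist B F < δF →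
        (2 * dist A E < min (min (dist E F) (dist F C)) (min (dist C D) (dist D A))) ∧
        (∀ a b c d e : ℕ,
          a * ∠ D A E + b * ∠ A E F + c * ∠ E F C + d * ∠ F C D + e * ∠ C D A
            = 2 * π →
          (1 ≤ b ∨ 1 ≤ c) →
          b = 1 ∧ c = 1 ∧
            ((0 < a ∧ d = 0 ∧ e = 0) ∨ (a = 0 ∧ 0 < d ∧ e = 0) ∨
              (a = 0 ∧ d = 0 ∧ 0 < e))) ∧
        (∀ l ∈ ({dist E F, 2 * dist F C} : Set ℝ), ∀ (a b : ℕ) (c : ℤ),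
          c ∈ ({0, 1, -1, 2, -2} : Set ℤ) →
          l ≠ a * dist C D + b * dist D A + (c : ℝ) * dist A E) := by
  refine Metric.exists_pos_forall_of_eventually_nhdsWithin ?_
  filter_upwards [self_mem_nhdsWithin, nhdsWithin_le_nhds hQ.eventually_two_mul_dist_lt_min]
    with E hE hAE
  have hsE := sbtw_of_mem_openSegment hQ.ne₁₂ hE
  have hs : ∀ F ∈ openSegment ℝ B C, Sbtw ℝ B F C := fun F =>
    sbtw_of_mem_openSegment hQ.rotate.ne₁₂
  have hlengths := eventually_nhdsNE_ne_nat_mul_add_nat_mul_add_int_mul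
    (dist_pos.2 hQ.rotate.rotate.ne₁₂) (dist_pos.2 hQ.rotate.rotate.rotate.ne₁₂) (dist A E)
    (toFinite {0, 1, -1, 2, -2})
  refine Metric.exists_pos_forall_of_eventually_nhdsWithin ?_
  filter_upwards [self_mem_nhdsWithin,
    nhdsWithin_le_nhds <| continuousAt_const.eventually_lt
      (g := fun F => min (min (dist E F) (dist F C)) (min (dist C D) (dist D A))) (by fun_prop) hAE,
    (tendsto_angle_nhdsGT hQ.not_collinear hsE hs).eventually
      (eventually_nhdsGT_perturbed_angle_relation hQ.rotate.rotate.rotate.angle_mem_Ioo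
        hQ.angle_mem_Ioo hQ.rotate.angle_mem_Ioo hQ.rotate.rotate.angle_mem_Ioo
        hQ.angle_add_angle_add_angle_add_angle),
    (tendsto_dist_nhdsNE hQ.not_collinear hsE hs).eventually (hlengths _),
    (tendsto_two_mul_dist_nhdsNE hs).eventually (hlengths _)] with F hF hi hii hEF hFC
  refine ⟨hi, ?_, ?_⟩
  · rwa [hsE.angle_eq_right D, angle_eq_pi_sub_of_sbtw hsE,
      angle_eq_angle_add_of_sbtw_of_sbtw hsE (hs F hF), (hs F hF).symm.angle_eq_left D]
  · rintro l (rfl | rfl)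
    exacts [hEF, hFC]
end

section
/- Let A, B, C be three non-collinear points in the Euclidean plane. For t, s ∈ (0,1), set E_t = A + t·(B − A) and F_s = B + s·(C − B). Then as (t, s) → (0, 0) within (0,1) × (0,1), the angle ∠A E_t F_s tends to π and the angle ∠E_t F_s C tends to ∠ABC. -/
open Real EuclideanGeometry Filter

/-!
The angle `∠ E F C` is continuous at the nondegenerate triple `(A, B, C)`, so it tends to
`∠ A B C`. The angle `∠ A E F` is not: its vertex `E` tends to `A`. But `E` lies strictly between
`A` and `B`, so `∠ A E F = π - ∠ B E F`, and `∠ B E F` tends to the angle `∠ B A B = 0`.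
-/

open Topology

section

variable {V P α : Type*} [NormedAddCommGroup V] [InnerProductSpace ℝ V] [MetricSpace P]
  [NormedAddTorsor V P] {l : Filter α}

theorem Filter.Tendsto.angle {f g h : α → P} {p₁ p₂ p₃ : P} (hf : Tendsto f l (𝓝 p₁))
    (hg : Tendsto g l (𝓝 p₂)) (hh : Tendsto h l (𝓝 p₃)) (h₁₂ : p₁ ≠ p₂) (h₃₂ : p₃ ≠ p₂) :
    Tendsto (fun x => ∠ (f x) (g x) (h x)) l (𝓝 (∠ p₁ p₂ p₃)) :=
  ((continuousAt_angle (V := V) (x := (p₁, p₂, p₃)) h₁₂ h₃₂).tendsto.comp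
    (hf.prodMk_nhds (hg.prodMk_nhds hh)) :)

theorem tendsto_angle_of_sbtw {a b c : P} {e f : α → P} (hab : a ≠ b) (hca : c ≠ a)
    (he : Tendsto e l (𝓝 a)) (hsbtw : ∀ᶠ x in l, Sbtw ℝ a (e x) b) (hf : Tendsto f l (𝓝 c)) :
    Tendsto (fun x => ∠ a (e x) (f x)) l (𝓝 (π - ∠ b a c)) := by
  have hsupp : ∀ᶠ x in l, π - ∠ b (e x) (f x) = ∠ a (e x) (f x) := by
    filter_upwards [hsbtw] with x hx
    have := angle_add_angle_eq_pi_of_angle_eq_pi (f x) hx.angle₁₂₃_eq_pi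
    rw [angle_comm (f x) (e x) a, angle_comm (f x) (e x) b] at this
    linarith
  exact ((tendsto_const_nhds.angle he hf hab.symm hca).const_sub π).congr' hsupp

end

/-- As E → A along AB and F → B along BC, the angle ∠AEF tends to π and the
angle ∠EFC tends to ∠ABC. -/
theorem angle_limits
    (A B C : P2) (h : AffineIndependent ℝ ![A, B, C]) :
    Tendsto (fun p : ℝ × ℝ => ∠ A (A + p.1 • (B - A)) (B + p.2 • (C - B)))
      (nhdsWithin (0, 0) (Set.Ioo (0:ℝ) 1 ×ˢ Set.Ioo (0:ℝ) 1)) (nhds π) ∧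
    Tendsto (fun p : ℝ × ℝ => ∠ (A + p.1 • (B - A)) (B + p.2 • (C - B)) C)
      (nhdsWithin (0, 0) (Set.Ioo (0:ℝ) 1 ×ˢ Set.Ioo (0:ℝ) 1)) (nhds (∠ A B C)) := by
  have hAB : A ≠ B := h.injective.ne (show (0 : Fin 3) ≠ 1 by decide)
  have hCB : C ≠ B := h.injective.ne (show (2 : Fin 3) ≠ 1 by decide)
  set L := 𝓝[Set.Ioo (0:ℝ) 1 ×ˢ Set.Ioo (0:ℝ) 1] ((0:ℝ), (0:ℝ))
  have hE : Tendsto (fun p : ℝ × ℝ => A + p.1 • (B - A)) L (𝓝 A) := by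
    have : Continuous (fun p : ℝ × ℝ => A + p.1 • (B - A)) := by fun_prop
    simpa using (this.tendsto (0, 0)).mono_left nhdsWithin_le_nhds
  have hF : Tendsto (fun p : ℝ × ℝ => B + p.2 • (C - B)) L (𝓝 B) := by
    have : Continuous (fun p : ℝ × ℝ => B + p.2 • (C - B)) := by fun_prop
    simpa using (this.tendsto (0, 0)).mono_left nhdsWithin_le_nhds
  have hsbtw : ∀ᶠ p in L, Sbtw ℝ A (A + p.1 • (B - A)) B := by
    filter_upwards [self_mem_nhdsWithin] with p hp
    rw [add_comm, ← AffineMap.lineMap_apply_module']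
    exact sbtw_lineMap_iff.mpr ⟨hAB, hp.1⟩
  refine ⟨?_, hE.angle hF tendsto_const_nhds hAB hCB⟩
  simpa [angle_self_of_ne hAB.symm] using tendsto_angle_of_sbtw hAB hAB.symm hE hsbtw hF
end
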